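/- Let v, w ∈ ℂ⁶ be nonzero vectors with (v₁,…,v₅) ≠ (0,…,0) and (w₁,…,w₅) ≠ (0,…,0), and such that w is not a scalar multiple of v and w is not a scalar multiple of ι(v). Let V⁺ denote the ℂ-vector space of homogeneous polynomials f ∈ ℂ[X₀,…,X₅] of degree 3 with σ(f) = f. Then the ℂ-linear evaluation map V⁺ → ℂ², f ↦ (f(v), f(w)), is surjective; i.e., the pair of points imposes two independent conditions on the invariant cubics. -/

import Mathlib

/-!
The σ-invariant cubics are spanned by the monomials of even degree in X₀; they include all cubes
of linear forms in X₁,…,X₅ and the cubics `X₀² Xₖ`, `Xₖ³` (k ≥ 1). Since the hypotheses are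
symmetric in v and w, it suffices to find an invariant cubic vanishing at v but not at w. With
k ≥ 1 such that wₖ ≠ 0: if the tails of v and w are not proportional, some
`(vₖ Xᵢ - vᵢ Xₖ)³` does it; if they are, `vₖ² X₀² Xₖ - v₀² Xₖ³` takes the value
`wₖ ((vₖ w₀)² - (v₀ wₖ)²)` at w, which vanishes only if w ∈ ℂv ∪ ℂι(v).
-/

open MvPolynomial

/-- The ℂ-algebra involution of ℂ[X₀,…,X₅] sending X₀ ↦ -X₀ and Xᵢ ↦ Xᵢ for i ≥ 1. -/
noncomputable def sigmaInv : MvPolynomial (Fin 6) ℂ →ₐ[ℂ] MvPolynomial (Fin 6) ℂ :=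
  aeval (fun i : Fin 6 => if i = 0 then -X 0 else X i)

/-- The linear involution ι of ℂ⁶ sending (x₀,x₁,…,x₅) to (-x₀,x₁,…,x₅). -/
def iotaInv (x : Fin 6 → ℂ) : Fin 6 → ℂ := fun i => if i = 0 then -x 0 else x i

theorem exists_mem_apply_eq_of_separating {K M : Type*} [Field K] [AddCommGroup M] [Module K M]
    {V : Submodule K M} {φ ψ : M →ₗ[K] K}
    (hf : ∃ f ∈ V, φ f = 0 ∧ ψ f ≠ 0) (hg : ∃ g ∈ V, ψ g = 0 ∧ φ g ≠ 0) (a b : K) :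
    ∃ h ∈ V, φ h = a ∧ ψ h = b := by
  obtain ⟨f, hfV, hφf, hψf⟩ := hf
  obtain ⟨g, hgV, hψg, hφg⟩ := hg
  refine ⟨(a / φ g) • g + (b / ψ f) • f, V.add_mem (V.smul_mem _ hgV) (V.smul_mem _ hfV), ?_, ?_⟩
  · simp [hφf, hφg]
  · simp [hψg, hψf]

theorem forall_ne_smul_symm {K M : Type*} [Field K] [AddCommGroup M] [Module K M] {v w : M}
    (hv : v ≠ 0) (h : ∀ c : K, w ≠ c • v) (c : K) : v ≠ c • w := by
  intro hvw
  have hc : c ≠ 0 := by rintro rfl; exact hv (by simpa using hvw)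
  exact h c⁻¹ (by rw [hvw, smul_smul, inv_mul_cancel₀ hc, one_smul])

theorem eq_smul_of_forall_mul_eq_mul {K ι : Type*} [Field K] {v w : ι → K} {k : ι}
    (hk : v k ≠ 0) (h : ∀ i, v k * w i = v i * w k) : w = (w k / v k) • v := by
  funext i
  rw [Pi.smul_apply, smul_eq_mul, div_mul_eq_mul_div, eq_div_iff hk, mul_comm, h, mul_comm]

theorem iotaInv_apply_zero (x : Fin 6 → ℂ) : iotaInv x 0 = -x 0 := rfl

theorem iotaInv_apply_of_ne_zero (x : Fin 6 → ℂ) {i : Fin 6} (hi : i ≠ 0) : iotaInv x i = x i :=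
  if_neg hi

theorem iotaInv_involutive : Function.Involutive iotaInv := by
  intro x
  funext i
  by_cases hi : i = 0 <;> simp [iotaInv, hi]

theorem iotaInv_smul (c : ℂ) (x : Fin 6 → ℂ) : iotaInv (c • x) = c • iotaInv x := by
  funext i
  by_cases hi : i = 0 <;> simp [iotaInv, hi]

theorem iotaInv_ne_zero {x : Fin 6 → ℂ} (hx : x ≠ 0) : iotaInv x ≠ 0 := by
  intro h
  apply hx
  rw [← iotaInv_involutive x, h]
  funext i
  simp [iotaInv]

theorem forall_ne_smul_iotaInv_symm {v w : Fin 6 → ℂ} (hv : v ≠ 0)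
    (h : ∀ c : ℂ, w ≠ c • iotaInv v) (c : ℂ) : v ≠ c • iotaInv w := by
  intro hvw
  apply forall_ne_smul_symm (iotaInv_ne_zero hv) h c
  rw [hvw, iotaInv_smul, iotaInv_involutive]

noncomputable def invariantCubics : Submodule ℂ (MvPolynomial (Fin 6) ℂ) :=
  homogeneousSubmodule (Fin 6) ℂ 3 ⊓ LinearMap.eqLocus sigmaInv.toLinearMap LinearMap.id

theorem mem_invariantCubics {f : MvPolynomial (Fin 6) ℂ} :
    f ∈ invariantCubics ↔ f.IsHomogeneous 3 ∧ sigmaInv f = f :=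
  Iff.rfl

theorem linear_form_cube_mem_invariantCubics (a b : ℂ) {i k : Fin 6} (hi : i ≠ 0) (hk : k ≠ 0) :
    (C a * X i - C b * X k) ^ 3 ∈ invariantCubics := by
  refine mem_invariantCubics.2 ⟨?_, by simp [sigmaInv, hi, hk]⟩
  have hlin : (C a * X i - C b * X k : MvPolynomial (Fin 6) ℂ).IsHomogeneous 1 :=
    ((isHomogeneous_C _ _).mul (isHomogeneous_X _ _)).sub
      ((isHomogeneous_C _ _).mul (isHomogeneous_X _ _))
  exact hlin.pow 3

theorem sq_X_zero_mul_sub_cube_mem_invariantCubics (a b : ℂ) {k : Fin 6} (hk : k ≠ 0) :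
    C a * X 0 ^ 2 * X k - C b * X k ^ 3 ∈ invariantCubics := by
  refine mem_invariantCubics.2 ⟨?_, by simp [sigmaInv, hk]⟩
  exact (((isHomogeneous_C _ _).mul ((isHomogeneous_X _ _).pow 2)).mul (isHomogeneous_X _ _)).sub
    ((isHomogeneous_C _ _).mul ((isHomogeneous_X _ _).pow 3))

theorem exists_eq_smul_or_eq_smul_iotaInv {v w : Fin 6 → ℂ} {k : Fin 6} (hk : k ≠ 0)
    (hvk : v k ≠ 0) (htail : ∀ i, i ≠ 0 → v k * w i = v i * w k)
    (h0 : (v k * w 0) ^ 2 = (v 0 * w k) ^ 2) :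
    (∃ c : ℂ, w = c • v) ∨ ∃ c : ℂ, w = c • iotaInv v := by
  have hprop (u : Fin 6 → ℂ) (hu : ∀ i, i ≠ 0 → u i = v i) (hu0 : v k * w 0 = u 0 * w k) :
      w = (w k / u k) • u := by
    refine eq_smul_of_forall_mul_eq_mul (by rwa [hu k hk]) fun i => ?_
    by_cases hi : i = 0
    · rw [hi, hu k hk, hu0]
    · rw [hu k hk, hu i hi, htail i hi]
  rcases sq_eq_sq_iff_eq_or_eq_neg.1 h0 with h | h
  · exact Or.inl ⟨_, hprop v (fun _ _ => rfl) h⟩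
  · refine Or.inr ⟨_, hprop (iotaInv v) (fun i hi => iotaInv_apply_of_ne_zero v hi) ?_⟩
    rw [h, iotaInv_apply_zero]
    ring

theorem exists_mem_invariantCubics_eval_eq_zero_ne_zero {v w : Fin 6 → ℂ}
    (hvtail : ∃ i : Fin 6, i ≠ 0 ∧ v i ≠ 0) (hwtail : ∃ i : Fin 6, i ≠ 0 ∧ w i ≠ 0)
    (hwv : ∀ c : ℂ, w ≠ c • v) (hwiv : ∀ c : ℂ, w ≠ c • iotaInv v) :
    ∃ f ∈ invariantCubics, eval v f = 0 ∧ eval w f ≠ 0 := by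
  obtain ⟨j, hj, hvj⟩ := hvtail
  obtain ⟨k, hk, hwk⟩ := hwtail
  by_cases htail : ∀ i, i ≠ 0 → v k * w i = v i * w k
  · have hvk : v k ≠ 0 := fun h0 => mul_ne_zero hvj hwk (by rw [← htail j hj, h0, zero_mul])
    refine ⟨_, sq_X_zero_mul_sub_cube_mem_invariantCubics (v k ^ 2) (v 0 ^ 2) hk, ?_, ?_⟩
    · simp only [eval_sub, eval_mul, eval_pow, eval_C, eval_X]
      ring
    · have hval : eval w (C (v k ^ 2) * X 0 ^ 2 * X k - C (v 0 ^ 2) * X k ^ 3) =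
          w k * ((v k * w 0) ^ 2 - (v 0 * w k) ^ 2) := by
        simp only [eval_sub, eval_mul, eval_pow, eval_C, eval_X]
        ring
      rw [hval]
      refine mul_ne_zero hwk (sub_ne_zero.2 fun h0 => ?_)
      rcases exists_eq_smul_or_eq_smul_iotaInv hk hvk htail h0 with ⟨c, hc⟩ | ⟨c, hc⟩
      exacts [hwv c hc, hwiv c hc]
  · push Not at htail
    obtain ⟨i, hi, hvw⟩ := htail
    refine ⟨_, linear_form_cube_mem_invariantCubics (v k) (v i) hi hk, ?_, ?_⟩
    · simp only [eval_sub, eval_mul, eval_pow, eval_C, eval_X]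
      ring
    · simp only [eval_sub, eval_mul, eval_pow, eval_C, eval_X]
      exact pow_ne_zero 3 (sub_ne_zero.2 hvw)

theorem two_independent_conditions_general (v w : Fin 6 → ℂ)
    (hvtail : ∃ i : Fin 6, i ≠ 0 ∧ v i ≠ 0) (hwtail : ∃ i : Fin 6, i ≠ 0 ∧ w i ≠ 0)
    (hwv : ∀ c : ℂ, w ≠ c • v) (hwiv : ∀ c : ℂ, w ≠ c • iotaInv v) :
    ∀ a b : ℂ, ∃ f : MvPolynomial (Fin 6) ℂ,
      f.IsHomogeneous 3 ∧ sigmaInv f = f ∧ eval v f = a ∧ eval w f = b := by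
  have hv : v ≠ 0 := by
    obtain ⟨i, -, hvi⟩ := hvtail
    exact fun h => hvi (by simp [h])
  have hsepv := exists_mem_invariantCubics_eval_eq_zero_ne_zero hvtail hwtail hwv hwiv
  have hsepw := exists_mem_invariantCubics_eval_eq_zero_ne_zero hwtail hvtail
    (forall_ne_smul_symm hv hwv) (forall_ne_smul_iotaInv_symm hv hwiv)
  simp only [← coe_aeval_eq_eval] at hsepv hsepw
  intro a b
  obtain ⟨f, hf, hfv, hfw⟩ := exists_mem_apply_eq_of_separating
    (φ := (aeval v).toLinearMap) (ψ := (aeval w).toLinearMap) hsepv hsepw a b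
  exact ⟨f, (mem_invariantCubics.1 hf).1, (mem_invariantCubics.1 hf).2,
    by simpa [coe_aeval_eq_eval] using hfv, by simpa [coe_aeval_eq_eval] using hfw⟩

/-- If v, w ∈ ℂ⁶ are nonzero with nonzero tails (v₁,…,v₅) ≠ 0 ≠ (w₁,…,w₅), and w is
not a scalar multiple of v nor of ι(v), then the pair (v, w) imposes two independent
conditions on the σ-invariant homogeneous cubics: the evaluation map f ↦ (f(v), f(w))
is surjective onto ℂ². -/
theorem two_independent_conditions (v w : Fin 6 → ℂ) (hv : v ≠ 0) (hw : w ≠ 0)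
    (hvtail : ∃ i : Fin 6, i ≠ 0 ∧ v i ≠ 0) (hwtail : ∃ i : Fin 6, i ≠ 0 ∧ w i ≠ 0)
    (hwv : ∀ c : ℂ, w ≠ c • v) (hwiv : ∀ c : ℂ, w ≠ c • iotaInv v) :
    ∀ a b : ℂ, ∃ f : MvPolynomial (Fin 6) ℂ,
      f.IsHomogeneous 3 ∧ sigmaInv f = f ∧ eval v f = a ∧ eval w f = b :=
  two_independent_conditions_general v w hvtail hwtail hwv hwiv
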